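/- Define B⋆(F) = −(1/2)·(1 + log(‖F‖_op²))·det F + (1/2)·‖F‖_op² on GL⁺(2), and W⁺_magic(F) = λmax/λmin − log(λmax/λmin) + log(det F). Then the Shield transformation satisfies B⋆#(F) = (1/2)·(W⁺_magic(F) − 1) for all F ∈ GL⁺(2). -/

import Mathlib

/-!
In dimension two the adjugate is the transpose conjugated by the quarter-turn rotation, so it has
the same operator norm as `F`; hence `‖F⁻¹‖ = λmax / det F`. Since `F⁻¹` has determinant
`1 / det F`, the Shield transform of `B⋆` is an explicit expression in `λmax` and `det F`, and with
`λmax / λmin = λmax² / det F` the identity reduces to the rules for `log` of products and powers.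
-/

/-- The operator norm (largest singular value) of a planar matrix. -/
noncomputable def opNorm2 (F : Matrix (Fin 2) (Fin 2) ℝ) : ℝ :=
  ‖Matrix.toEuclideanCLM (𝕜 := ℝ) F‖

/-- The Shield transformation W#(F) = det F · W(F⁻¹). -/
noncomputable def shield (W : Matrix (Fin 2) (Fin 2) ℝ → ℝ)
    (F : Matrix (Fin 2) (Fin 2) ℝ) : ℝ :=
  F.det * W F⁻¹

/-- B⋆(F) = −(1/2)(1 + log(‖F‖_op²))·det F + (1/2)‖F‖_op². -/
noncomputable def Bstar (F : Matrix (Fin 2) (Fin 2) ℝ) : ℝ :=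
  -(1/2) * (1 + Real.log (opNorm2 F^2)) * F.det + (1/2) * opNorm2 F^2

/-- W⁺_magic(F) = λmax/λmin − log(λmax/λmin) + log det F, where λmax = ‖F‖_op
and λmin = det F / λmax are the singular values of F ∈ GL⁺(2). -/
noncomputable def WmagicPlus (F : Matrix (Fin 2) (Fin 2) ℝ) : ℝ :=
  let lmax := opNorm2 F
  let lmin := F.det / lmax
  lmax / lmin - Real.log (lmax / lmin) + Real.log F.det

section OperatorNorm

open scoped Matrix.Norms.L2Operator
open Matrix

theorem opNorm2_eq_l2_opNorm (F : Matrix (Fin 2) (Fin 2) ℝ) : opNorm2 F = ‖F‖ := rfl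

def quarterTurn : Matrix (Fin 2) (Fin 2) ℝ := !![0, 1; -1, 0]

theorem quarterTurn_mem_unitary : quarterTurn ∈ unitary (Matrix (Fin 2) (Fin 2) ℝ) := by
  rw [Unitary.mem_iff]
  constructor <;> ext i j <;> fin_cases i <;> fin_cases j <;>
    simp [quarterTurn, star, Matrix.mul_apply]

theorem adjugate_eq_quarterTurn_mul_transpose_mul (M : Matrix (Fin 2) (Fin 2) ℝ) :
    M.adjugate = quarterTurn * Mᵀ * star quarterTurn := by
  ext i j
  fin_cases i <;> fin_cases j <;>
    simp [quarterTurn, adjugate_fin_two, Matrix.mul_apply, Fin.sum_univ_two, star, vecMul,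
      dotProduct]

theorem l2_opNorm_adjugate_fin_two (M : Matrix (Fin 2) (Fin 2) ℝ) : ‖M.adjugate‖ = ‖M‖ := by
  let U : unitary (Matrix (Fin 2) (Fin 2) ℝ) := ⟨quarterTurn, quarterTurn_mem_unitary⟩
  calc ‖M.adjugate‖ = ‖(U : Matrix (Fin 2) (Fin 2) ℝ) * (Mᵀ * (star U : unitary _))‖ := by
        rw [adjugate_eq_quarterTurn_mul_transpose_mul, mul_assoc]; rfl
    _ = ‖Mᴴ‖ := by
        rw [CStarRing.norm_coe_unitary_mul, CStarRing.norm_mul_coe_unitary,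
          conjTranspose_eq_transpose_of_trivial]
    _ = ‖M‖ := l2_opNorm_conjTranspose M

/-- For singular `F` both sides vanish, since then `F⁻¹ = 0` and `x / 0 = 0`. -/
theorem opNorm2_inv (F : Matrix (Fin 2) (Fin 2) ℝ) : opNorm2 F⁻¹ = opNorm2 F / |F.det| := by
  rw [opNorm2_eq_l2_opNorm, opNorm2_eq_l2_opNorm, inv_def, Ring.inverse_eq_inv', norm_smul,
    l2_opNorm_adjugate_fin_two, Real.norm_eq_abs, abs_inv, div_eq_inv_mul]

theorem opNorm2_pos_of_det_ne_zero {F : Matrix (Fin 2) (Fin 2) ℝ} (h : F.det ≠ 0) :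
    0 < opNorm2 F := by
  rw [opNorm2_eq_l2_opNorm, norm_pos_iff]
  rintro rfl
  simp at h

end OperatorNorm

/-- The Shield transformation of B⋆ equals (1/2)(W⁺_magic − 1) on GL⁺(2). -/
theorem stmt_10 (F : Matrix (Fin 2) (Fin 2) ℝ) (hdet : 0 < F.det) :
    shield Bstar F = (1/2) * (WmagicPlus F - 1) := by
  have hl : 0 < opNorm2 F := opNorm2_pos_of_det_ne_zero hdet.ne'
  have hnorm_inv : opNorm2 F⁻¹ = opNorm2 F / F.det := by rw [opNorm2_inv, abs_of_pos hdet]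
  have hdet_inv : F⁻¹.det = F.det⁻¹ := by rw [Matrix.det_nonsing_inv, Ring.inverse_eq_inv']
  rw [shield, Bstar, WmagicPlus, hnorm_inv, hdet_inv]
  set l := opNorm2 F
  set c := F.det
  have hlog_inv : Real.log ((l / c) ^ 2) = 2 * Real.log l - 2 * Real.log c := by
    rw [Real.log_pow, Real.log_div hl.ne' hdet.ne']; ring
  have hlog_ratio : Real.log (l / (c / l)) = 2 * Real.log l - Real.log c := by
    rw [div_div_eq_mul_div, ← sq, Real.log_div (by positivity) hdet.ne', Real.log_pow]; ring
  rw [hlog_inv, hlog_ratio]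
  field_simp
  ring
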